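/- arXiv:1710.08646 — 2 statements merged into one kernel-verified Lean document; each statement's English description precedes it below -/
import Mathlib

section
/- Let β = (β_1, …, β_{d+1}) satisfy β_1 ≥ ⋯ ≥ β_{d+1} > 0 and β_1 + ⋯ + β_{d+1} = 1. If for some ℓ ∈ [d] the equality ∏_{i=1}^t (β_i - β_{d+1}) = ∑_{j=t+1}^{d+1} (β_j - β_{d+1}) + (d+1) β_{d+1} holds for every t ∈ [ℓ], then β_i = 1/s_i + β_{d+1} for every i ∈ [ℓ], where s_i is the i-th Sylvester number. -/
/-!
Put `γ i = β i - β (d + 1)`. Since the `β i` sum to `1`, the right-hand side of the `t`-th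
equality is `1 - (γ 1 + ⋯ + γ t)`, so the equalities read `P t = 1 - S t` for the partial
products `P` and partial sums `S` of `γ`. Subtracting consecutive equalities gives
`P t * γ (t + 1) = P t - γ (t + 1)`, hence `γ (t + 1) = 1 / (1 + 1 / P t)`. Inductively
`P t = 1 / (s 1 ⋯ s t)`, and `1 + s 1 ⋯ s t = s (t + 1)`.
-/

/-- The Sylvester sequence: `s 1 = 2` and `s i = 1 + s 1 * s 2 * ⋯ * s (i-1)` for `i ≥ 2`. -/
def sylvester : ℕ → ℕ
  | 0 => 2
  | 1 => 2
  | n + 2 => 1 + ∏ i ∈ (Finset.Icc 1 (n + 1)).attach, sylvester i.1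
  decreasing_by
    exact Nat.lt_succ_of_le (Finset.mem_Icc.mp i.2).2

open Finset

theorem sylvester_succ (t : ℕ) : sylvester (t + 1) = 1 + ∏ i ∈ Icc 1 t, sylvester i := by
  rcases t with _ | n
  · simp [sylvester]
  · rw [sylvester, prod_attach (Icc 1 (n + 1)) sylvester]

theorem sylvester_pos (i : ℕ) : 0 < sylvester i := by
  rcases i with _ | n
  · simp [sylvester]
  · rw [sylvester_succ]; omega

theorem prod_sylvester_pos (t : ℕ) : 0 < ∏ i ∈ Icc 1 t, (sylvester i : ℝ) :=
  prod_pos fun i _ => mod_cast sylvester_pos i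

theorem sum_Icc_one_add_sum_Icc_succ {M : Type*} [AddCommMonoid M] (f : ℕ → M) {t n : ℕ}
    (ht : t ≤ n) : ∑ i ∈ Icc 1 t, f i + ∑ i ∈ Icc (t + 1) n, f i = ∑ i ∈ Icc 1 n, f i := by
  simp only [Icc_add_one_left_eq_Ioc]
  exact sum_Ioc_consecutive f (Nat.zero_le t) ht

theorem eq_inv_add_one_of_mul_eq_sub {Q p g : ℝ} (hQ : 0 < Q) (hp : p = Q⁻¹)
    (h : p * g = p - g) : g = (Q + 1)⁻¹ := by
  subst hp
  field_simp at h ⊢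
  linarith

section PartialProducts

variable {γ : ℕ → ℝ} {ℓ : ℕ}
  (hγ : ∀ t ∈ Icc 1 ℓ, ∏ i ∈ Icc 1 t, γ i = 1 - ∑ i ∈ Icc 1 t, γ i)
include hγ

theorem mul_eq_prod_sub_of_prod_eq_one_sub_sum {t : ℕ} (ht : t < ℓ) :
    (∏ i ∈ Icc 1 t, γ i) * γ (t + 1) = ∏ i ∈ Icc 1 t, γ i - γ (t + 1) := by
  have hnext := hγ (t + 1) (mem_Icc.mpr ⟨by omega, ht⟩)
  rw [prod_Icc_succ_top (by omega), sum_Icc_succ_top (by omega)] at hnext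
  have hcur : ∏ i ∈ Icc 1 t, γ i = 1 - ∑ i ∈ Icc 1 t, γ i := by
    rcases Nat.eq_zero_or_pos t with rfl | ht0
    · simp
    · exact hγ t (mem_Icc.mpr ⟨ht0, ht.le⟩)
  rw [hnext, hcur]
  ring

theorem prod_eq_inv_prod_sylvester_of_prod_eq_one_sub_sum {t : ℕ} (ht : t ≤ ℓ) :
    ∏ i ∈ Icc 1 t, γ i = (∏ i ∈ Icc 1 t, (sylvester i : ℝ))⁻¹ := by
  induction t with
  | zero => simp
  | succ t ih =>
    have hprev := ih (by omega)
    have hnext := eq_inv_add_one_of_mul_eq_sub (prod_sylvester_pos t) hprev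
      (mul_eq_prod_sub_of_prod_eq_one_sub_sum hγ (by omega))
    rw [prod_Icc_succ_top (by omega), prod_Icc_succ_top (by omega), hprev, hnext,
      sylvester_succ, mul_inv]
    push_cast
    ring

theorem eq_inv_sylvester_of_prod_eq_one_sub_sum :
    ∀ i ∈ Icc 1 ℓ, γ i = 1 / (sylvester i : ℝ) := by
  intro i hi
  obtain ⟨t, rfl⟩ : ∃ t, i = t + 1 := ⟨i - 1, by grind⟩
  have ht : t < ℓ := by grind
  rw [eq_inv_add_one_of_mul_eq_sub (prod_sylvester_pos t)
      (prod_eq_inv_prod_sylvester_of_prod_eq_one_sub_sum hγ ht.le)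
      (mul_eq_prod_sub_of_prod_eq_one_sub_sum hγ ht), sylvester_succ]
  push_cast
  ring

end PartialProducts

theorem ps_equalities_give_sylvester_general (d ℓ : ℕ) (β : ℕ → ℝ)
    (hsum : ∑ i ∈ Finset.Icc 1 (d + 1), β i = 1)
    (hℓ : ℓ ∈ Finset.Icc 1 d)
    (heq : ∀ t ∈ Finset.Icc 1 ℓ,
      ∏ i ∈ Finset.Icc 1 t, (β i - β (d + 1)) =
        (∑ j ∈ Finset.Icc (t + 1) (d + 1), (β j - β (d + 1))) + ((d : ℝ) + 1) * β (d + 1)) :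
    ∀ i ∈ Finset.Icc 1 ℓ, β i = 1 / (sylvester i : ℝ) + β (d + 1) := by
  set c := β (d + 1)
  have htotal : ∑ i ∈ Icc 1 (d + 1), (β i - c) = 1 - ((d : ℝ) + 1) * c := by
    rw [sum_sub_distrib, hsum, sum_const, Nat.card_Icc]
    push_cast
    ring
  have hγ : ∀ t ∈ Icc 1 ℓ, ∏ i ∈ Icc 1 t, (β i - c) = 1 - ∑ i ∈ Icc 1 t, (β i - c) := by
    intro t ht
    have hsplit := sum_Icc_one_add_sum_Icc_succ (fun i => β i - c) (by grind : t ≤ d + 1)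
    linarith [heq t ht]
  intro i hi
  linarith [eq_inv_sylvester_of_prod_eq_one_sub_sum hγ i hi]

theorem ps_equalities_give_sylvester (d ℓ : ℕ) (hd : 1 ≤ d) (β : ℕ → ℝ)
    (hord : ∀ t, 1 ≤ t → t ≤ d → β (t + 1) ≤ β t)
    (hpos : 0 < β (d + 1))
    (hsum : ∑ i ∈ Finset.Icc 1 (d + 1), β i = 1)
    (hℓ : ℓ ∈ Finset.Icc 1 d)
    (heq : ∀ t ∈ Finset.Icc 1 ℓ,
      ∏ i ∈ Finset.Icc 1 t, (β i - β (d + 1)) =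
        (∑ j ∈ Finset.Icc (t + 1) (d + 1), (β j - β (d + 1))) + ((d : ℝ) + 1) * β (d + 1)) :
    ∀ i ∈ Finset.Icc 1 ℓ, β i = 1 / (sylvester i : ℝ) + β (d + 1) :=
  ps_equalities_give_sylvester_general d ℓ β hsum hℓ heq
end

section
/- For d ≥ 5 and 1 ≤ ℓ ≤ d-3, one has y_ℓ ≤ y_{ℓ+1}, where y_ℓ = (s_ℓ - 1)^2 (d+1)^{d-ℓ+1} (s_{ℓ+1} - 1)^{d-ℓ} and s_i is the i-th Sylvester number. -/
theorem sylvester_one : sylvester 1 = 2 := by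
  rw [sylvester]

theorem sylvester_add_two (n : ℕ) :
    sylvester (n + 2) = 1 + ∏ i ∈ Finset.Icc 1 (n + 1), sylvester i := by
  rw [sylvester, Finset.prod_attach]

theorem prod_Icc_sylvester_add_one (n : ℕ) :
    ∏ i ∈ Finset.Icc 1 n, sylvester i + 1 = sylvester (n + 1) := by
  cases n with
  | zero => rw [Finset.Icc_eq_empty_of_lt zero_lt_one, Finset.prod_empty, sylvester_one]
  | succ n => rw [sylvester_add_two, add_comm]

theorem two_le_sylvester (n : ℕ) : 2 ≤ sylvester n := by
  induction n using Nat.strong_induction_on with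
  | _ n ih =>
    match n with
    | 0 => rw [sylvester]
    | 1 => rw [sylvester_one]
    | n + 2 =>
      rw [sylvester_add_two, add_comm]
      exact Nat.succ_le_succ <| Finset.one_le_prod' fun i hi =>
        (ih i (Nat.lt_succ_of_le (Finset.mem_Icc.mp hi).2)).trans' one_le_two

theorem sylvester_succ_s14 {n : ℕ} (hn : 1 ≤ n) :
    sylvester (n + 1) = sylvester n * (sylvester n - 1) + 1 := by
  obtain ⟨m, rfl⟩ := Nat.exists_eq_add_of_le' hn
  rw [← prod_Icc_sylvester_add_one, Finset.prod_Icc_succ_top (by omega), mul_comm,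
    ← Nat.eq_sub_of_add_eq (prod_Icc_sylvester_add_one m)]

theorem cast_sylvester_succ_sub_one {n : ℕ} (hn : 1 ≤ n) :
    (sylvester (n + 1) : ℝ) - 1 = sylvester n * ((sylvester n : ℝ) - 1) := by
  rw [sylvester_succ_s14 hn, Nat.cast_add_one, add_sub_cancel_right, Nat.cast_mul,
    Nat.cast_sub (one_le_two.trans (two_le_sylvester n)), Nat.cast_one]

theorem add_one_le_sylvester (n : ℕ) : n + 1 ≤ sylvester n := by
  induction n with
  | zero => exact (two_le_sylvester 0).trans' (by norm_num)
  | succ n ih =>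
    rcases Nat.eq_zero_or_pos n with rfl | hn
    · rw [sylvester_one]
    · have : sylvester n ≤ sylvester n * (sylvester n - 1) :=
        Nat.le_mul_of_pos_right _ (by have := two_le_sylvester n; omega)
      rw [sylvester_succ_s14 hn]
      omega

theorem add_add_two_le_pow {ℓ k : ℕ} (hℓ : 1 ≤ ℓ) (hk : 2 ≤ k) :
    ℓ + k + 2 ≤ (ℓ + 2) ^ k := by
  have bernoulli := one_add_le_pow_of_two_add_nonneg (Nat.zero_le (2 + (ℓ + 1))) k
  rw [show 1 + (ℓ + 1) = ℓ + 2 by ring] at bernoulli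
  push_cast at bernoulli
  nlinarith

theorem sq_mul_pow_mul_pow_le {R : Type*} [CommRing R] [PartialOrder R] [IsOrderedRing R]
    {a t D : R} (k : ℕ) (ht : 1 ≤ t) (hD : 0 ≤ D) (ha : a ^ 2 ≤ t - 1) (hDt : D ≤ t ^ k) :
    a ^ 2 * D ^ (k + 2) * (t - 1) ^ (k + 1) ≤ (t - 1) ^ 2 * D ^ (k + 1) * (t * (t - 1)) ^ k := by
  have hb : 0 ≤ t - 1 := sub_nonneg.mpr ht
  calc a ^ 2 * D ^ (k + 2) * (t - 1) ^ (k + 1)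
      = (a ^ 2 * D) * (D ^ (k + 1) * (t - 1) ^ (k + 1)) := by ring
    _ ≤ ((t - 1) * t ^ k) * (D ^ (k + 1) * (t - 1) ^ (k + 1)) := by gcongr
    _ = (t - 1) ^ 2 * D ^ (k + 1) * (t * (t - 1)) ^ k := by rw [mul_pow]; ring

theorem y_monotone_general (d ℓ : ℕ) (hℓ : 1 ≤ ℓ) (hℓd : ℓ ≤ d - 3) :
    ((sylvester ℓ : ℝ) - 1) ^ 2 * ((d : ℝ) + 1) ^ (d - ℓ + 1) *
        ((sylvester (ℓ + 1) : ℝ) - 1) ^ (d - ℓ) ≤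
      ((sylvester (ℓ + 1) : ℝ) - 1) ^ 2 * ((d : ℝ) + 1) ^ (d - (ℓ + 1) + 1) *
        ((sylvester (ℓ + 2) : ℝ) - 1) ^ (d - (ℓ + 1)) := by
  obtain ⟨k, hk⟩ : ∃ k, d - (ℓ + 1) = k := ⟨_, rfl⟩
  rw [hk, show d - ℓ + 1 = k + 2 by omega, show d - ℓ = k + 1 by omega,
    cast_sylvester_succ_sub_one (by omega : 1 ≤ ℓ + 1)]
  have hsq : ((sylvester ℓ : ℝ) - 1) ^ 2 ≤ (sylvester (ℓ + 1) : ℝ) - 1 := by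
    have : (2 : ℝ) ≤ sylvester ℓ := by exact_mod_cast two_le_sylvester ℓ
    rw [cast_sylvester_succ_sub_one hℓ]
    nlinarith
  have hD : d + 1 ≤ sylvester (ℓ + 1) ^ k :=
    calc d + 1 = ℓ + k + 2 := by omega
      _ ≤ (ℓ + 2) ^ k := add_add_two_le_pow hℓ (by omega)
      _ ≤ sylvester (ℓ + 1) ^ k := Nat.pow_le_pow_left (add_one_le_sylvester (ℓ + 1)) k
  have ht : (1 : ℝ) ≤ sylvester (ℓ + 1) := by
    exact_mod_cast one_le_two.trans (two_le_sylvester (ℓ + 1))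
  exact sq_mul_pow_mul_pow_le k ht (by positivity) hsq (by exact_mod_cast hD)

theorem y_monotone (d ℓ : ℕ) (hd : 5 ≤ d) (hℓ : 1 ≤ ℓ) (hℓd : ℓ ≤ d - 3) :
    ((sylvester ℓ : ℝ) - 1) ^ 2 * ((d : ℝ) + 1) ^ (d - ℓ + 1) *
        ((sylvester (ℓ + 1) : ℝ) - 1) ^ (d - ℓ) ≤
      ((sylvester (ℓ + 1) : ℝ) - 1) ^ 2 * ((d : ℝ) + 1) ^ (d - (ℓ + 1) + 1) *
        ((sylvester (ℓ + 2) : ℝ) - 1) ^ (d - (ℓ + 1)) :=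
  y_monotone_general d ℓ hℓ hℓd
end
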